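/- arXiv:0903.1044 — 12 statements merged into one kernel-verified Lean document; each statement's English description precedes it below -/
import Mathlib

section
/- Let f be analytic on the punctured unit disc E = {z : 0 < |z| < 1} with a simple pole at 0, and suppose α ≥ 1 and Re(z f(z)) > α |z² f'(z) + z f(z)| for all z ∈ E. Then |z f'(z)/f(z) + 1| < 1/α for all z ∈ E (in particular f(z) ≠ 0 on E). -/
open Complex Metric

lemma ne_zero_of_mul_norm_lt_re {α : ℝ} (hα : 0 ≤ α) {v w : ℂ} (h : α * ‖v‖ < w.re) :
    w ≠ 0 := by
  rintro rfl
  have : 0 ≤ α * ‖v‖ := by positivity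
  simp only [zero_re] at h
  linarith

lemma norm_div_lt_one_div_of_mul_norm_lt_re {α : ℝ} (hα : 0 < α) {v w : ℂ}
    (h : α * ‖v‖ < w.re) : ‖v / w‖ < 1 / α := by
  have hw : 0 < ‖w‖ := norm_pos_iff.mpr (ne_zero_of_mul_norm_lt_re hα.le h)
  rw [norm_div, div_lt_div_iff₀ hw hα]
  linarith [re_le_norm w]

lemma mul_deriv_div_add_one_eq {f : ℂ → ℂ} {z : ℂ} (hz : z ≠ 0) (hf : f z ≠ 0) :
    z * deriv f z / f z + 1 = (z ^ 2 * deriv f z + z * f z) / (z * f z) := by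
  field_simp

theorem stmt0_general (α : ℝ) (hα : 1 ≤ α)
    (f : ℂ → ℂ)
    (hME : ∀ z : ℂ, 0 < ‖z‖ → ‖z‖ < 1 →
      (z * f z).re > α * ‖z ^ 2 * deriv f z + z * f z‖) :
    ∀ z : ℂ, 0 < ‖z‖ → ‖z‖ < 1 →
      f z ≠ 0 ∧ ‖z * deriv f z / f z + 1‖ < 1 / α := by
  intro z hz0 hz1
  have hαpos : 0 < α := zero_lt_one.trans_le hα
  have h := hME z hz0 hz1
  have hzf : z * f z ≠ 0 := ne_zero_of_mul_norm_lt_re hαpos.le h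
  have hfz : f z ≠ 0 := right_ne_zero_of_mul hzf
  refine ⟨hfz, ?_⟩
  rw [mul_deriv_div_add_one_eq (left_ne_zero_of_mul hzf) hfz]
  exact norm_div_lt_one_div_of_mul_norm_lt_re hαpos h

theorem stmt0 (α : ℝ) (hα : 1 ≤ α) (g : ℂ → ℂ)
    (hg : AnalyticOn ℂ g (ball (0:ℂ) 1))
    (f : ℂ → ℂ) (hf : ∀ z : ℂ, z ≠ 0 → f z = z⁻¹ + g z)
    (hME : ∀ z : ℂ, 0 < ‖z‖ → ‖z‖ < 1 →
      (z * f z).re > α * ‖z ^ 2 * deriv f z + z * f z‖) :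
    ∀ z : ℂ, 0 < ‖z‖ → ‖z‖ < 1 →
      f z ≠ 0 ∧ ‖z * deriv f z / f z + 1‖ < 1 / α :=
  stmt0_general α hα f hME
end

section
/- The function f(z) = e^z / z satisfies |z f'(z)/f(z) + 1| < 1 for all z in the punctured unit disc E (so f ∈ MF), but f does not satisfy Re(z f(z)) > |z² f'(z) + z f(z)| for all z ∈ E (so f ∉ ME(1)). -/
/-!
For `f z = exp z / z` one has `z f'(z) / f(z) + 1 = z`, so the `MF` condition is just `|z| < 1`.
On the other hand `z f(z) = exp z` and `z² f'(z) + z f(z) = z exp z`, so at `z = i t` the `ME(1)`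
condition reads `cos t > |t|`, which fails for `t = 9/10`.
-/

open Complex

lemma deriv_exp_div_self {z : ℂ} (hz : z ≠ 0) :
    deriv (fun w => exp w / w) z = exp z * (z - 1) / z ^ 2 := by
  have h : HasDerivAt (fun w => exp w / w) ((exp z * z - exp z * 1) / z ^ 2) z :=
    (hasDerivAt_exp z).div (hasDerivAt_id z) hz
  rw [h.deriv, mul_one, mul_sub, mul_one]

lemma mul_deriv_exp_div_self_div_add_one {z : ℂ} (hz : z ≠ 0) :
    z * deriv (fun w => exp w / w) z / (exp z / z) + 1 = z := by
  rw [deriv_exp_div_self hz]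
  field_simp [exp_ne_zero]
  ring

lemma sq_mul_deriv_exp_div_self_add {z : ℂ} (hz : z ≠ 0) :
    z ^ 2 * deriv (fun w => exp w / w) z + z * (exp z / z) = z * exp z := by
  rw [deriv_exp_div_self hz]
  field_simp
  ring

lemma Real.cos_nine_tenths_lt : Real.cos (9 / 10) < 9 / 10 := by
  have h := Real.cos_bound (x := 9 / 10) (by norm_num [abs_of_pos])
  rw [abs_le] at h
  norm_num [abs_of_pos] at h
  linarith [h.2]

theorem stmt2 (f : ℂ → ℂ) (hf : ∀ z : ℂ, f z = Complex.exp z / z) :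
    (∀ z : ℂ, 0 < ‖z‖ → ‖z‖ < 1 →
      ‖z * deriv f z / f z + 1‖ < 1) ∧
    ¬ (∀ z : ℂ, 0 < ‖z‖ → ‖z‖ < 1 →
      (z * f z).re > ‖z ^ 2 * deriv f z + z * f z‖) := by
  obtain rfl : f = fun w => exp w / w := funext hf
  refine ⟨fun z hz0 hz1 => ?_, fun hME => ?_⟩
  · rwa [mul_deriv_exp_div_self_div_add_one (norm_pos_iff.mp hz0)]
  · set z : ℂ := (9 / 10 : ℝ) * I
    have hz : ‖z‖ = 9 / 10 := by simp [z]
    have h := hME z (by rw [hz]; norm_num) (by rw [hz]; norm_num)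
    have hz0 : z ≠ 0 := norm_pos_iff.mp (by rw [hz]; norm_num)
    rw [sq_mul_deriv_exp_div_self_add hz0, mul_div_cancel₀ _ hz0, exp_ofReal_mul_I_re, norm_mul,
      norm_exp_ofReal_mul_I, mul_one, hz] at h
    exact Real.cos_nine_tenths_lt.not_gt h
end

section
/- The function f(z) = (1 − z)² / z satisfies Re(z f'(z)/f(z)) < 0 for all z in the punctured unit disc E, but there exists z ∈ E with |z f'(z)/f(z) + 1| ≥ 1. -/
/-!
Here `z f'(z) / f(z) = -(1 + z) / (1 - z)`, minus the Cayley transform, which maps the unit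
disc into the right half-plane. At `z = 1/2` it equals `-3`, at distance `2` from `-1`.
-/

open Complex

lemma hasDerivAt_one_sub_sq_div_self {z : ℂ} (hz : z ≠ 0) :
    HasDerivAt (fun w : ℂ => (1 - w) ^ 2 / w) ((z ^ 2 - 1) / z ^ 2) z := by
  have hnum : HasDerivAt (fun w : ℂ => (1 - w) ^ 2) (2 * (1 - z) * (-1)) z := by
    simpa using ((hasDerivAt_id z).const_sub 1).fun_pow 2
  exact (hnum.div (hasDerivAt_id' z) hz).congr_deriv (by ring)

lemma mul_deriv_div_eq_of_eq_one_sub_sq_div_self {f : ℂ → ℂ}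
    (hf : ∀ z : ℂ, f z = (1 - z) ^ 2 / z) {z : ℂ} (hz : z ≠ 0) (hz1 : z ≠ 1) :
    z * deriv f z / f z = -((1 + z) / (1 - z)) := by
  have hsub : (1 : ℂ) - z ≠ 0 := sub_ne_zero.mpr hz1.symm
  rw [funext hf, (hasDerivAt_one_sub_sq_div_self hz).deriv]
  field_simp
  ring

lemma re_one_add_div_one_sub_pos {z : ℂ} (hz : ‖z‖ < 1) :
    0 < ((1 + z) / (1 - z)).re := by
  have hz1 : (1 : ℂ) - z ≠ 0 := by
    intro h
    rw [← sub_eq_zero.mp h] at hz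
    simp at hz
  have hnormSq : z.re ^ 2 + z.im ^ 2 < 1 := by
    have := Complex.sq_norm z
    rw [normSq_apply] at this
    nlinarith [norm_nonneg z]
  -- `Re ((1 + z) / (1 - z)) = (1 - |z|²) / |1 - z|²`
  rw [div_re, ← add_div]
  apply div_pos _ (normSq_pos.mpr hz1)
  simp only [add_re, add_im, sub_re, sub_im,
    one_re, one_im]
  nlinarith

theorem stmt3 (f : ℂ → ℂ) (hf : ∀ z : ℂ, f z = (1 - z) ^ 2 / z) :
    (∀ z : ℂ, 0 < ‖z‖ → ‖z‖ < 1 →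
      (z * deriv f z / f z).re < 0) ∧
    (∃ z : ℂ, 0 < ‖z‖ ∧ ‖z‖ < 1 ∧
      1 ≤ ‖z * deriv f z / f z + 1‖) := by
  constructor
  · intro z hz0 hz1
    have hne1 : z ≠ 1 := by rintro rfl; simp at hz1
    rw [mul_deriv_div_eq_of_eq_one_sub_sq_div_self hf (norm_pos_iff.mp hz0) hne1, neg_re]
    exact neg_neg_of_pos (re_one_add_div_one_sub_pos hz1)
  · refine ⟨1 / 2, by norm_num, by norm_num, ?_⟩
    rw [mul_deriv_div_eq_of_eq_one_sub_sq_div_self hf (by norm_num) (by norm_num)]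
    norm_num
end

section
/- Let α ≥ 0 and let f(z) = 1/z + Σ_{n≥0} a_n z^n be analytic on the punctured unit disc E. If Σ_{n≥0} (1 + α(n+1)) |a_n| ≤ 1, then Re(z f(z)) ≥ α |z² f'(z) + z f(z)| for all z ∈ E; if Σ_{n≥0} (1 + α(n+1)) |a_n| < 1, then the inequality is strict. -/
open Complex

theorem stmt5 (α : ℝ) (hα : 0 ≤ α) (a : ℕ → ℂ)
    (hSum : Summable fun n : ℕ => (1 + α * (n + 1)) * ‖a n‖)
    (f : ℂ → ℂ) (hf : ∀ z : ℂ, z ≠ 0 → f z = z⁻¹ + ∑' n : ℕ, a n * z ^ n) :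
    ((∑' n : ℕ, (1 + α * (n + 1)) * ‖a n‖) ≤ 1 →
      ∀ z : ℂ, 0 < ‖z‖ → ‖z‖ < 1 →
        (z * f z).re ≥ α * ‖z ^ 2 * deriv f z + z * f z‖) ∧
    ((∑' n : ℕ, (1 + α * (n + 1)) * ‖a n‖) < 1 →
      ∀ z : ℂ, 0 < ‖z‖ → ‖z‖ < 1 →
        (z * f z).re > α * ‖z ^ 2 * deriv f z + z * f z‖) := by
  -- basic facts
  have hfac : ∀ n : ℕ, (1:ℝ) ≤ 1 + α * (n + 1) := by
    intro n
    have h1 : (0:ℝ) ≤ (n:ℝ) + 1 := by positivity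
    nlinarith
  have hA : Summable fun n => ‖a n‖ := by
    refine Summable.of_nonneg_of_le (fun n => norm_nonneg _) (fun n => ?_) hSum
    have h1 := hfac n
    nlinarith [norm_nonneg (a n)]
  set A : ℝ := ∑' n, ‖a n‖ with hAdef
  have hbound : ∀ n, ‖a n‖ ≤ A :=
    fun n => hA.le_tsum n (fun i _ => norm_nonneg _)
  -- summability of a n * w ^ n for ‖w‖ ≤ 1
  have hSw : ∀ w : ℂ, ‖w‖ ≤ 1 → Summable fun n => a n * w ^ n := by
    intro w hw
    refine Summable.of_norm_bounded hA (fun n => ?_)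
    rw [norm_mul, norm_pow]
    calc ‖a n‖ * ‖w‖ ^ n
        ≤ ‖a n‖ * 1 := by
          exact mul_le_mul_of_nonneg_left (pow_le_one₀ (norm_nonneg _) hw)
            (norm_nonneg _)
      _ = ‖a n‖ := mul_one _
  -- the main strict claim
  have key : (∑' n : ℕ, (1 + α * (n + 1)) * ‖a n‖) ≤ 1 →
      ∀ z : ℂ, 0 < ‖z‖ → ‖z‖ < 1 →
        (z * f z).re > α * ‖z ^ 2 * deriv f z + z * f z‖ := by
    intro hM z hz0 hz1
    have hzne : z ≠ 0 := by
      intro h; rw [h] at hz0; simp at hz0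
    set r : ℝ := ‖z‖ with hrdef
    have hr0 : 0 < r := hz0
    have hr1 : r < 1 := hz1
    set ρ : ℝ := (r + 1) / 2 with hρdef
    have hρ0 : 0 < ρ := by positivity
    have hρ1 : ρ < 1 := by simp only [hρdef]; linarith
    have hrρ : r < ρ := by simp only [hρdef]; linarith
    set S : ℂ → ℂ := fun w => ∑' n : ℕ, a n * w ^ n with hSdef
    -- summable majorant n * ρ^(n-1)
    have hgeo : Summable fun n : ℕ => (n:ℝ) * ρ ^ (n - 1) := by
      have h1 : Summable fun n : ℕ => (n:ℝ) ^ 1 * ρ ^ n := by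
        apply summable_pow_mul_geometric_of_norm_lt_one
        rw [Real.norm_eq_abs, abs_of_pos hρ0]; exact hρ1
      have h2 := h1.mul_left ρ⁻¹
      refine h2.congr (fun n => ?_)
      cases n with
      | zero => simp
      | succ m =>
        simp only [Nat.add_sub_cancel, pow_succ, pow_one]
        field_simp
    have hu : Summable fun n : ℕ => ‖a n‖ * ((n:ℝ) * ρ ^ (n - 1)) := by
      refine Summable.of_nonneg_of_le (fun n => ?_) (fun n => ?_) (hgeo.mul_left A)
      · positivity
      · exact mul_le_mul_of_nonneg_right (hbound n) (by positivity)
    -- derivative of S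
    have hderivS : HasDerivAt S (∑' n : ℕ, a n * ((n:ℂ) * z ^ (n - 1))) z := by
      refine hasDerivAt_tsum_of_isPreconnected (t := Metric.ball (0:ℂ) ρ) hu
        (Metric.isOpen_ball) ((convex_ball (0:ℂ) ρ).isPreconnected)
        (fun n y _ => (hasDerivAt_pow n y).const_mul (a n)) (fun n y hy => ?_)
        (Metric.mem_ball_self hρ0) (hSw 0 (by simp)) ?_
      · rw [Metric.mem_ball, dist_zero_right] at hy
        simp only [norm_mul, norm_pow, Complex.norm_natCast]
        refine mul_le_mul_of_nonneg_left ?_ (norm_nonneg _)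
        refine mul_le_mul_of_nonneg_left ?_ (Nat.cast_nonneg n)
        exact pow_le_pow_left₀ (norm_nonneg _) hy.le _
      · rw [Metric.mem_ball, dist_zero_right]; exact hrρ
    set D : ℂ := ∑' n : ℕ, a n * ((n:ℂ) * z ^ (n - 1)) with hDdef
    -- deriv f z
    have hfeq : f =ᶠ[nhds z] fun w => w⁻¹ + S w := by
      filter_upwards [isOpen_ne.mem_nhds hzne] with w hw
      exact hf w hw
    have hdf : deriv f z = -(z ^ 2)⁻¹ + D := by
      rw [hfeq.deriv_eq]
      exact ((hasDerivAt_inv hzne).add hderivS).deriv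
    -- rewrite the quantity z^2 f' + z f
    have hexpr : z ^ 2 * deriv f z + z * f z = z ^ 2 * D + z * S z := by
      rw [hdf, hf z hzne]
      have hz2 : z ^ 2 ≠ 0 := pow_ne_zero _ hzne
      field_simp
      ring
    -- summabilities
    have hSz := hSw z hz1.le
    have hterm : ∀ n : ℕ, (n:ℝ) * ‖a n‖ * r ^ (n + 1)
        ≤ r ^ 2 * (‖a n‖ * ((n:ℝ) * ρ ^ (n - 1))) := by
      intro n
      cases n with
      | zero => simp
      | succ m =>
        simp only [Nat.add_sub_cancel]
        have he : r ^ (m + 1 + 1) = r ^ 2 * r ^ m := by ring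
        rw [he]
        have hrρm : r ^ m ≤ ρ ^ m := pow_le_pow_left₀ hr0.le hrρ.le m
        calc (↑(m+1):ℝ) * ‖a (m+1)‖ * (r ^ 2 * r ^ m)
            ≤ (↑(m+1):ℝ) * ‖a (m+1)‖ * (r ^ 2 * ρ ^ m) := by
              refine mul_le_mul_of_nonneg_left
                (mul_le_mul_of_nonneg_left hrρm (by positivity)) (by positivity)
          _ = r ^ 2 * (‖a (m+1)‖ * ((↑(m+1):ℝ) * ρ ^ m)) := by ring
    have ht1 : Summable fun n : ℕ => ‖a n‖ * r ^ (n + 1) := by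
      refine Summable.of_nonneg_of_le (fun n => by positivity) (fun n => ?_) hA
      calc ‖a n‖ * r ^ (n + 1)
          ≤ ‖a n‖ * 1 :=
            mul_le_mul_of_nonneg_left (pow_le_one₀ hr0.le hz1.le) (norm_nonneg _)
        _ = ‖a n‖ := mul_one _
    have hsum1 : Summable fun n : ℕ => (n:ℂ) * a n * z ^ (n + 1) := by
      refine Summable.of_norm_bounded (hu.mul_left (r ^ 2)) (fun n => ?_)
      rw [norm_mul, norm_mul, Complex.norm_natCast, norm_pow]
      exact hterm n
    have hsum2 : Summable fun n : ℕ => a n * z ^ (n + 1) := by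
      refine Summable.of_norm_bounded hA (fun n => ?_)
      rw [norm_mul, norm_pow]
      calc ‖a n‖ * r ^ (n + 1)
          ≤ ‖a n‖ * 1 :=
            mul_le_mul_of_nonneg_left (pow_le_one₀ hr0.le hz1.le) (norm_nonneg _)
        _ = ‖a n‖ := mul_one _
    -- z^2 D + z S z = ∑ (n+1) a n z^(n+1)
    have hT : z ^ 2 * D + z * S z = ∑' n : ℕ, ((n:ℂ) + 1) * a n * z ^ (n + 1) := by
      have h1 : z ^ 2 * D = ∑' n : ℕ, (n:ℂ) * a n * z ^ (n + 1) := by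
        rw [hDdef, ← tsum_mul_left]
        refine tsum_congr (fun n => ?_)
        cases n with
        | zero => simp
        | succ m =>
          simp only [Nat.add_sub_cancel]
          push_cast
          ring
      have h2 : z * S z = ∑' n : ℕ, a n * z ^ (n + 1) := by
        rw [hSdef, ← tsum_mul_left]
        refine tsum_congr (fun n => ?_)
        ring
      rw [h1, h2, ← Summable.tsum_add hsum1 hsum2]
      refine tsum_congr (fun n => ?_)
      ring
    -- norm estimates
    have hw' : Summable fun n : ℕ => ((n:ℝ) + 1) * ‖a n‖ * r ^ (n + 1) := by
      refine Summable.of_nonneg_of_le (fun n => by positivity) (fun n => ?_)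
        ((hu.mul_left (r ^ 2)).add ht1)
      calc ((n:ℝ) + 1) * ‖a n‖ * r ^ (n + 1)
          = (n:ℝ) * ‖a n‖ * r ^ (n + 1) + ‖a n‖ * r ^ (n + 1) := by ring
        _ ≤ r ^ 2 * (‖a n‖ * ((n:ℝ) * ρ ^ (n - 1))) + ‖a n‖ * r ^ (n + 1) :=
            add_le_add (hterm n) le_rfl
    have habsT : ‖∑' n : ℕ, ((n:ℂ) + 1) * a n * z ^ (n + 1)‖
        ≤ ∑' n : ℕ, ((n:ℝ) + 1) * ‖a n‖ * r ^ (n + 1) := by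
      refine le_trans (norm_tsum_le_tsum_norm ?_) (le_of_eq (tsum_congr fun n => ?_))
      · refine hw'.congr (fun n => ?_)
        rw [norm_mul, norm_mul, norm_pow]
        have : ‖(n:ℂ) + 1‖ = (n:ℝ) + 1 := by
          rw [show ((n:ℂ) + 1) = ((n + 1 : ℕ) : ℂ) by push_cast; ring, Complex.norm_natCast]
          push_cast; ring
        rw [this]
      · rw [norm_mul, norm_mul, norm_pow]
        have : ‖(n:ℂ) + 1‖ = (n:ℝ) + 1 := by
          rw [show ((n:ℂ) + 1) = ((n + 1 : ℕ) : ℂ) by push_cast; ring, Complex.norm_natCast]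
          push_cast; ring
        rw [this]
    -- lower bound for (z f z).re
    have hzf : z * f z = 1 + ∑' n : ℕ, a n * z ^ (n + 1) := by
      rw [hf z hzne]
      have h2 : z * S z = ∑' n : ℕ, a n * z ^ (n + 1) := by
        rw [hSdef, ← tsum_mul_left]
        exact tsum_congr (fun n => by ring)
      rw [← h2, hSdef]
      field_simp
    have hre : (z * f z).re ≥ 1 - ∑' n : ℕ, ‖a n‖ * r ^ (n + 1) := by
      rw [hzf]
      have h1 : (1 + ∑' n : ℕ, a n * z ^ (n + 1)).re
          = 1 + (∑' n : ℕ, a n * z ^ (n + 1)).re := by simp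
      rw [h1]
      have h2 : -(‖∑' n : ℕ, a n * z ^ (n + 1)‖)
          ≤ (∑' n : ℕ, a n * z ^ (n + 1)).re := by
        have := Complex.abs_re_le_norm (∑' n : ℕ, a n * z ^ (n + 1))
        have h3 := neg_abs_le (∑' n : ℕ, a n * z ^ (n + 1)).re
        linarith [abs_le.mp this]
      have h4 : ‖∑' n : ℕ, a n * z ^ (n + 1)‖
          ≤ ∑' n : ℕ, ‖a n‖ * r ^ (n + 1) := by
        refine le_trans (norm_tsum_le_tsum_norm hsum2.norm) (le_of_eq (tsum_congr fun n => ?_))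
        rw [norm_mul, norm_pow]
      linarith
    -- combine
    have hcomb : (∑' n : ℕ, ‖a n‖ * r ^ (n + 1))
        + α * ∑' n : ℕ, ((n:ℝ) + 1) * ‖a n‖ * r ^ (n + 1)
        = ∑' n : ℕ, (1 + α * ((n:ℝ) + 1)) * ‖a n‖ * r ^ (n + 1) := by
      rw [← tsum_mul_left, ← Summable.tsum_add ht1 (hw'.mul_left α)]
      exact tsum_congr (fun n => by ring)
    have hfin : (∑' n : ℕ, (1 + α * ((n:ℝ) + 1)) * ‖a n‖ * r ^ (n + 1))
        ≤ r * ∑' n : ℕ, (1 + α * ((n:ℝ) + 1)) * ‖a n‖ := by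
      rw [← tsum_mul_left]
      refine Summable.tsum_le_tsum (fun n => ?_) (ht1.add (hw'.mul_left α) |>.congr
        (fun n => by ring)) (hSum.mul_left r)
      have hfn := hfac n
      have : r ^ (n + 1) ≤ r := by
        calc r ^ (n + 1) = r * r ^ n := by ring
          _ ≤ r * 1 := mul_le_mul_of_nonneg_left (pow_le_one₀ hr0.le hz1.le) hr0.le
          _ = r := mul_one _
      calc (1 + α * ((n:ℝ) + 1)) * ‖a n‖ * r ^ (n + 1)
          ≤ (1 + α * ((n:ℝ) + 1)) * ‖a n‖ * r := by
            refine mul_le_mul_of_nonneg_left this ?_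
            have := norm_nonneg (a n); nlinarith
        _ = r * ((1 + α * ((n:ℝ) + 1)) * ‖a n‖) := by ring
    have hM0 : 0 ≤ ∑' n : ℕ, (1 + α * ((n:ℝ) + 1)) * ‖a n‖ := by
      refine tsum_nonneg (fun n => ?_)
      have hfn := hfac n
      have := norm_nonneg (a n); nlinarith
    have hrM : r * (∑' n : ℕ, (1 + α * ((n:ℝ) + 1)) * ‖a n‖) < 1 := by
      calc r * (∑' n : ℕ, (1 + α * ((n:ℝ) + 1)) * ‖a n‖)
          ≤ r * 1 := mul_le_mul_of_nonneg_left hM hr0.le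
        _ = r := mul_one _
        _ < 1 := hr1
    have hαT : α * ‖z ^ 2 * deriv f z + z * f z‖
        ≤ α * ∑' n : ℕ, ((n:ℝ) + 1) * ‖a n‖ * r ^ (n + 1) := by
      rw [hexpr, hT]
      exact mul_le_mul_of_nonneg_left habsT hα
    linarith
  exact ⟨fun hM z h1 h2 => (key hM z h1 h2).le, fun hM => key hM.le⟩
end

section
/- For each integer n ≥ 1, the function g(z) = 1/z + z^n/(n+2) satisfies Re(z g(z)) > |z² g'(z) + z g(z)| for all z in the punctured unit disc E. -/
/-! With `w = z ^ (n + 1)` one has `z g(z) = 1 + w / (n + 2)` and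
`z² g'(z) + z g(z) = (n + 1) w / (n + 2)`, so the claim reduces to
`(n + 1) |w| < n + 2 + Re w`, which follows from `Re w ≥ -|w|` and `|w| < 1`. -/

open Complex

lemma mul_inv_add_pow_div {z : ℂ} (hz : z ≠ 0) (n : ℕ) (c : ℂ) :
    z * (z⁻¹ + z ^ n / c) = 1 + z ^ (n + 1) / c := by
  rw [mul_add, mul_inv_cancel₀ hz, ← mul_div_assoc, ← pow_succ']

lemma hasDerivAt_inv_add_pow_div {z : ℂ} (hz : z ≠ 0) (n : ℕ) (c : ℂ) :
    HasDerivAt (fun w => w⁻¹ + w ^ n / c) (-(z ^ 2)⁻¹ + n * z ^ (n - 1) / c) z :=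
  (hasDerivAt_inv hz).add ((hasDerivAt_pow n z).div_const c)

lemma sq_mul_deriv_add_mul_inv_add_pow_div {z : ℂ} (hz : z ≠ 0) (n : ℕ) (c : ℂ) :
    z ^ 2 * (-(z ^ 2)⁻¹ + n * z ^ (n - 1) / c) + z * (z⁻¹ + z ^ n / c) =
      (n + 1) * z ^ (n + 1) / c := by
  have hpow : z ^ 2 * (n * z ^ (n - 1)) = n * z ^ (n + 1) := by
    rcases n with _ | m
    · simp
    · simp only [Nat.add_sub_cancel]; ring
  rw [mul_inv_add_pow_div hz, mul_add, mul_neg, mul_inv_cancel₀ (pow_ne_zero 2 hz),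
    ← mul_div_assoc, hpow]
  ring

lemma norm_mul_div_lt_re_one_add_div {t : ℝ} (ht : 0 ≤ t) {w : ℂ} (hw : ‖w‖ < 1) :
    ‖(t : ℂ) * w / (t + 1)‖ < (1 + w / (t + 1)).re := by
  have hcast : (t : ℂ) + 1 = ((t + 1 : ℝ) : ℂ) := by push_cast; rfl
  have hre : -‖w‖ ≤ w.re := (abs_le.mp (abs_re_le_norm w)).1
  rw [hcast, norm_div, norm_mul, norm_real, norm_real, Real.norm_of_nonneg ht,
    Real.norm_of_nonneg (by linarith), add_re, one_re, div_ofReal_re,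
    div_lt_iff₀ (by linarith), add_mul, div_mul_cancel₀ _ (by linarith)]
  nlinarith [norm_nonneg w]

theorem stmt6_general (n : ℕ)
    (g : ℂ → ℂ) (hg : ∀ z : ℂ, z ≠ 0 → g z = z⁻¹ + z ^ n / (n + 2)) :
    ∀ z : ℂ, 0 < ‖z‖ → ‖z‖ < 1 →
      (z * g z).re > ‖z ^ 2 * deriv g z + z * g z‖ := by
  intro z hz0 hz1
  have hz : z ≠ 0 := norm_pos_iff.mp hz0
  have hderiv : deriv g z = -(z ^ 2)⁻¹ + n * z ^ (n - 1) / (n + 2) := by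
    have heq : g =ᶠ[nhds z] fun w => w⁻¹ + w ^ n / (n + 2) := (eventually_ne_nhds hz).mono hg
    rw [heq.deriv_eq]
    exact (hasDerivAt_inv_add_pow_div hz n _).deriv
  have hw : ‖z ^ (n + 1)‖ < 1 := by
    rw [norm_pow]
    exact pow_lt_one₀ (norm_nonneg z) hz1 (Nat.succ_ne_zero n)
  rw [hderiv, hg z hz, sq_mul_deriv_add_mul_inv_add_pow_div hz, mul_inv_add_pow_div hz]
  have key := norm_mul_div_lt_re_one_add_div (t := n + 1) (by positivity) hw
  push_cast at key
  rwa [add_assoc, one_add_one_eq_two] at key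

theorem stmt6 (n : ℕ) (hn : 1 ≤ n)
    (g : ℂ → ℂ) (hg : ∀ z : ℂ, z ≠ 0 → g z = z⁻¹ + z ^ n / (n + 2)) :
    ∀ z : ℂ, 0 < ‖z‖ → ‖z‖ < 1 →
      (z * g z).re > ‖z ^ 2 * deriv g z + z * g z‖ :=
  stmt6_general n g hg
end

section
/- Let α > 0 and n be an integer with n > (2 − 3α)/α and n ≥ 1. Then the function g(z) = 1/z + z^n/(n+2) fails to satisfy Re(z g'(z)/g(z)) < −α for all z in the punctured unit disc E; i.e., there exists z ∈ E with Re(z g'(z)/g(z)) ≥ −α. -/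
/-!
For real `z = r ∈ (0, 1)` and `t = r ^ (n + 1)` one computes
`z g'(z) / g(z) = (n t - (n + 2)) / (t + n + 2)`, which tends to `-2 / (n + 3)` as `r → 1⁻`;
the hypothesis on `n` says exactly that `-2 / (n + 3) > -α`.
-/

open Complex Filter Set Topology

theorem mul_deriv_div_eq_of_eq_inv_add_mul_pow {f : ℂ → ℂ} {c : ℂ} {n : ℕ}
    (hf : ∀ z, z ≠ 0 → f z = z⁻¹ + c * z ^ n) {z : ℂ} (hz : z ≠ 0) :
    z * deriv f z / f z = (n * c * z ^ (n + 1) - 1) / (c * z ^ (n + 1) + 1) := by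
  have hderiv : HasDerivAt f (-(z ^ 2)⁻¹ + c * (n * z ^ (n - 1))) z := by
    refine ((hasDerivAt_inv hz).add ((hasDerivAt_pow n z).const_mul c)).congr_of_eventuallyEq ?_
    filter_upwards [isOpen_compl_singleton.mem_nhds hz] with w hw using hf w hw
  have hpow : (n : ℂ) * z ^ (n - 1) * z = n * z ^ n := by
    cases n <;> simp [pow_succ, mul_assoc]
  rw [hderiv.deriv, hf z hz, ← mul_div_mul_left _ _ hz]
  congr 1
  · field_simp
    linear_combination c * z * hpow
  · field_simp
    ring

theorem exists_mem_Ioo_lt_re_of_continuousAt {ψ : ℂ → ℂ} {β : ℝ} (hψ : ContinuousAt ψ 1)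
    (hβ : β < (ψ 1).re) : ∃ r : ℝ, r ∈ Ioo 0 1 ∧ β < (ψ r).re := by
  have hofReal : Tendsto (fun r : ℝ => (r : ℂ)) (𝓝[<] 1) (𝓝 1) :=
    (continuous_ofReal.tendsto' 1 1 ofReal_one).mono_left nhdsWithin_le_nhds
  have hre : Tendsto (fun r : ℝ => (ψ r).re) (𝓝[<] 1) (𝓝 (ψ 1).re) :=
    (continuous_re.tendsto _).comp (hψ.tendsto.comp hofReal)
  obtain ⟨r, hr, hr01⟩ :=
    ((hre.eventually (lt_mem_nhds hβ)).and (Ioo_mem_nhdsLT one_pos)).exists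
  exact ⟨r, hr01, hr⟩

theorem natCast_add_two_inv_add_one_ne_zero (n : ℕ) : ((n : ℂ) + 2)⁻¹ + 1 ≠ 0 := by
  have hn2 : (n : ℂ) + 2 ≠ 0 := by exact_mod_cast (by omega : n + 2 ≠ 0)
  have hn3 : (n : ℂ) + 3 ≠ 0 := by exact_mod_cast (by omega : n + 3 ≠ 0)
  rw [show ((n : ℂ) + 2)⁻¹ + 1 = (n + 3) / (n + 2) by field_simp; ring]
  exact div_ne_zero hn3 hn2

theorem natCast_mul_add_two_inv_sub_one_div (n : ℕ) :
    ((n : ℂ) * ((n : ℂ) + 2)⁻¹ - 1) / (((n : ℂ) + 2)⁻¹ + 1) =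
      ((-2 / (n + 3) : ℝ) : ℂ) := by
  have hn2 : (n : ℂ) + 2 ≠ 0 := by exact_mod_cast (by omega : n + 2 ≠ 0)
  have hn3 : (n : ℂ) + 3 ≠ 0 := by exact_mod_cast (by omega : n + 3 ≠ 0)
  push_cast
  rw [div_eq_div_iff (natCast_add_two_inv_add_one_ne_zero n) hn3]
  field_simp
  ring

theorem neg_lt_neg_two_div_of_div_lt {α x : ℝ} (hα : 0 < α) (hx : (2 - 3 * α) / α < x) :
    -α < -2 / (x + 3) := by
  rw [div_lt_iff₀ hα] at hx
  rw [neg_div, neg_lt_neg_iff, div_lt_iff₀ (by nlinarith)]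
  linarith

theorem stmt7_general (α : ℝ) (hα : 0 < α) (n : ℕ)
    (hnα : (n : ℝ) > (2 - 3 * α) / α)
    (g : ℂ → ℂ) (hg : ∀ z : ℂ, z ≠ 0 → g z = z⁻¹ + z ^ n / (n + 2)) :
    ∃ z : ℂ, 0 < ‖z‖ ∧ ‖z‖ < 1 ∧
      (z * deriv g z / g z).re ≥ -α := by
  set c : ℂ := ((n : ℂ) + 2)⁻¹
  have hg' : ∀ z : ℂ, z ≠ 0 → g z = z⁻¹ + c * z ^ n := fun z hz => by
    rw [hg z hz, div_eq_inv_mul]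
  set ψ : ℂ → ℂ := fun z => (n * c * z ^ (n + 1) - 1) / (c * z ^ (n + 1) + 1)
  have hψ : ContinuousAt ψ 1 := by
    refine ContinuousAt.div (by fun_prop) (by fun_prop) ?_
    simpa using natCast_add_two_inv_add_one_ne_zero n
  have hψ1 : -α < (ψ 1).re := by
    simp only [ψ, c, one_pow, mul_one, natCast_mul_add_two_inv_sub_one_div, ofReal_re]
    exact neg_lt_neg_two_div_of_div_lt hα hnα
  obtain ⟨r, ⟨hr0, hr1⟩, hr⟩ := exists_mem_Ioo_lt_re_of_continuousAt hψ hψ1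
  refine ⟨r, by simpa [abs_of_pos hr0], by simpa [abs_of_pos hr0], ?_⟩
  rw [mul_deriv_div_eq_of_eq_inv_add_mul_pow hg' (ofReal_ne_zero.mpr hr0.ne')]
  exact hr.le

theorem stmt7 (α : ℝ) (hα : 0 < α) (n : ℕ) (hn : 1 ≤ n)
    (hnα : (n : ℝ) > (2 - 3 * α) / α)
    (g : ℂ → ℂ) (hg : ∀ z : ℂ, z ≠ 0 → g z = z⁻¹ + z ^ n / (n + 2)) :
    ∃ z : ℂ, 0 < ‖z‖ ∧ ‖z‖ < 1 ∧
      (z * deriv g z / g z).re ≥ -α :=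
  stmt7_general α hα n hnα g hg
end

section
/- Let α > 0, n ≥ 1, and d_n = 1/(√(α² n² + 1) + α n), so that 0 < d_n < 1. Then the function f defined by z f(z) = (1 + d_n z^n)/(1 − d_n z^n) satisfies Re(z f(z)) ≥ α |z² f'(z) + z f(z)| for all z ∈ E, and the coefficient of z^{n-1} in f is 2 d_n. -/
open Complex Filter

private lemma iterEq {f g : ℂ → ℂ} {x : ℂ} (h : f =ᶠ[nhds x] g) (j : ℕ) :
    iteratedDeriv j f =ᶠ[nhds x] iteratedDeriv j g := by
  induction j with
  | zero => simpa [iteratedDeriv_zero] using h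
  | succ j ih => simpa [iteratedDeriv_succ] using ih.deriv

private lemma protAnalyticDeriv {k : ℂ → ℂ} (hk : AnalyticAt ℂ k 0) :
    AnalyticAt ℂ (deriv k) 0 := by
  have h : AnalyticOnNhd ℂ k {y | AnalyticAt ℂ k y} := fun y hy => hy
  exact h.deriv 0 hk

private lemma aux (m : ℕ) (k : ℂ → ℂ) (hk : AnalyticAt ℂ k 0) :
    ∀ j : ℕ, j ≤ m → ∃ k' : ℂ → ℂ, AnalyticAt ℂ k' 0 ∧
      k' 0 = (m.descFactorial j : ℂ) * k 0 ∧
      iteratedDeriv j (fun z => z ^ m * k z) =ᶠ[nhds (0:ℂ)] fun z => z ^ (m - j) * k' z := by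
  intro j
  induction j with
  | zero =>
    intro _
    exact ⟨k, hk, by simp, by simp [iteratedDeriv_zero]⟩
  | succ j ih =>
    intro hj
    obtain ⟨k', hk', hval, he⟩ := ih (by omega)
    set M := m - j with hM
    have hM1 : 1 ≤ M := by omega
    have hdK : AnalyticAt ℂ (deriv k') 0 := protAnalyticDeriv hk'
    refine ⟨fun z => (M : ℂ) * k' z + z * deriv k' z,
      (analyticAt_const.mul hk').add (analyticAt_id.mul hdK), ?_, ?_⟩
    · simp only [hval, Nat.descFactorial_succ]
      push_cast
      ring
    · have hder : deriv (fun z : ℂ => z ^ M * k' z) =ᶠ[nhds (0:ℂ)]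
          fun z => z ^ (M - 1) * ((M : ℂ) * k' z + z * deriv k' z) := by
        filter_upwards [hk'.eventually_analyticAt] with z hz
        have h1 : DifferentiableAt ℂ (fun u : ℂ => u ^ M) z := (differentiable_pow M).differentiableAt
        have h2 : DifferentiableAt ℂ k' z := hz.differentiableAt
        rw [deriv_fun_mul h1 h2, deriv_pow_field]
        have : z ^ M = z ^ (M - 1) * z := by
          rw [← pow_succ]
          congr 1
          omega
        rw [this]
        ring
      have h0 : iteratedDeriv (j + 1) (fun z : ℂ => z ^ m * k z)
          =ᶠ[nhds (0:ℂ)] deriv (fun z : ℂ => z ^ M * k' z) := by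
        rw [iteratedDeriv_succ]
        exact he.deriv
      refine h0.trans (hder.trans ?_)
      have : m - (j + 1) = M - 1 := by omega
      rw [this]

set_option maxHeartbeats 1000000 in
theorem stmt9 (α : ℝ) (hα : 0 < α) (n : ℕ) (hn : 1 ≤ n)
    (d : ℝ) (hd : d = 1 / (Real.sqrt (α ^ 2 * n ^ 2 + 1) + α * n))
    (f : ℂ → ℂ)
    (hf : ∀ z : ℂ, z ≠ 0 →
      f z = ((1 + (d : ℂ) * z ^ n) / (1 - (d : ℂ) * z ^ n)) / z) :
    (∀ z : ℂ, 0 < ‖z‖ → ‖z‖ < 1 →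
      (z * f z).re ≥ α * ‖z ^ 2 * deriv f z + z * f z‖) ∧
    iteratedDeriv n (fun z : ℂ => (1 + (d : ℂ) * z ^ n) / (1 - (d : ℂ) * z ^ n)) 0
      = 2 * (d : ℂ) * n.factorial := by
  -- basic real facts about d
  set s : ℝ := Real.sqrt (α ^ 2 * n ^ 2 + 1) with hs_def
  have hsnn : 0 ≤ α ^ 2 * n ^ 2 + 1 := by positivity
  have hs_sq : s ^ 2 = α ^ 2 * n ^ 2 + 1 := Real.sq_sqrt hsnn
  have hs1 : 1 ≤ s := by
    nlinarith [Real.sqrt_nonneg (α ^ 2 * n ^ 2 + 1)]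
  have hn1 : (1 : ℝ) ≤ (n : ℝ) := by exact_mod_cast hn
  have hαn : 0 < α * n := by positivity
  have hden_pos : 0 < s + α * n := by linarith
  have hd_pos : 0 < d := by rw [hd]; positivity
  have hd_eq : d * (s + α * n) = 1 := by
    rw [hd]; field_simp
  have hkey : d ^ 2 + 2 * (α * n) * d = 1 := by
    have hdval : d = s - α * n := by
      have h2 : (s - α * n) * (s + α * n) = 1 := by nlinarith
      nlinarith [hd_eq, h2, hden_pos]
    nlinarith [hs_sq, hdval]
  have hd_lt1 : d < 1 := by nlinarith [hd_pos, hαn, hkey]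
  constructor
  · -- Part 1
    intro z hz0 hz1
    have hz : z ≠ 0 := by
      intro h; rw [h] at hz0; simp at hz0
    set w : ℂ := (d : ℂ) * z ^ n with hw
    have habsw : ‖w‖ = d * ‖z‖ ^ n := by
      rw [hw, norm_mul, norm_pow, Complex.norm_real, Real.norm_eq_abs, abs_of_pos hd_pos]
    have hp1 : ‖z‖ ^ n ≤ 1 := pow_le_one₀ (norm_nonneg z) hz1.le
    have hr_le : ‖w‖ ≤ d := by
      rw [habsw]
      nlinarith [hp1, hd_pos]
    have hrw1 : ‖w‖ < 1 := lt_of_le_of_lt hr_le hd_lt1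
    have hD : (1 : ℂ) - w ≠ 0 := by
      intro h
      have hw1 : w = 1 := by linear_combination -h
      rw [hw1] at hrw1; simp at hrw1
    have hD' : (1 : ℂ) - (d : ℂ) * z ^ n ≠ 0 := by rw [← hw]; exact hD
    -- derivative of f at z
    have hzn : z ^ n = z ^ (n - 1) * z := by
      rw [← pow_succ]; congr 1; omega
    have hNd : HasDerivAt (fun u : ℂ => 1 + (d : ℂ) * u ^ n) ((d : ℂ) * ((n : ℂ) * z ^ (n - 1))) z :=
      ((hasDerivAt_pow n z).const_mul ((d : ℂ))).const_add 1
    have hDd : HasDerivAt (fun u : ℂ => 1 - (d : ℂ) * u ^ n) (-((d : ℂ) * ((n : ℂ) * z ^ (n - 1)))) z :=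
      ((hasDerivAt_pow n z).const_mul ((d : ℂ))).const_sub 1
    have hg : HasDerivAt (fun u : ℂ => (1 + (d : ℂ) * u ^ n) / (1 - (d : ℂ) * u ^ n))
        (2 * (d : ℂ) * (n : ℂ) * z ^ (n - 1) / (1 - (d : ℂ) * z ^ n) ^ 2) z := by
      have := hNd.fun_div hDd hD'
      refine this.congr_deriv ?_
      congr 1
      ring
    have hF : HasDerivAt (fun u : ℂ => ((1 + (d : ℂ) * u ^ n) / (1 - (d : ℂ) * u ^ n)) / u)
        ((2 * (d : ℂ) * (n : ℂ) * z ^ (n - 1) / (1 - (d : ℂ) * z ^ n) ^ 2 * z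
          - ((1 + (d : ℂ) * z ^ n) / (1 - (d : ℂ) * z ^ n)) * 1) / z ^ 2) z :=
      hg.div (hasDerivAt_id z) hz
    have hfe : f =ᶠ[nhds z] fun u : ℂ => ((1 + (d : ℂ) * u ^ n) / (1 - (d : ℂ) * u ^ n)) / u := by
      filter_upwards [isOpen_compl_singleton.mem_nhds (by simpa using hz)] with u hu
      exact hf u hu
    have hderiv : deriv f z =
        (2 * (d : ℂ) * (n : ℂ) * z ^ (n - 1) / (1 - (d : ℂ) * z ^ n) ^ 2 * z
          - ((1 + (d : ℂ) * z ^ n) / (1 - (d : ℂ) * z ^ n)) * 1) / z ^ 2 := by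
      rw [hfe.deriv_eq]
      exact hF.deriv
    have hz2 : z ^ 2 ≠ 0 := pow_ne_zero 2 hz
    have e1 : z ^ 2 * deriv f z
        = 2 * (d : ℂ) * (n : ℂ) * z ^ (n - 1) / (1 - (d : ℂ) * z ^ n) ^ 2 * z
          - ((1 + (d : ℂ) * z ^ n) / (1 - (d : ℂ) * z ^ n)) * 1 := by
      rw [hderiv, mul_comm, div_mul_cancel₀ _ hz2]
    have e2 : z * f z = (1 + (d : ℂ) * z ^ n) / (1 - (d : ℂ) * z ^ n) := by
      rw [hf z hz, mul_comm, div_mul_cancel₀ _ hz]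
    have hE : z ^ 2 * deriv f z + z * f z = 2 * (d : ℂ) * (n : ℂ) * z ^ n / (1 - w) ^ 2 := by
      rw [e1, e2, hw]
      rw [show (2 * (d : ℂ) * (n : ℂ) * z ^ (n - 1) / (1 - (d : ℂ) * z ^ n) ^ 2 * z
          - ((1 + (d : ℂ) * z ^ n) / (1 - (d : ℂ) * z ^ n)) * 1)
          + (1 + (d : ℂ) * z ^ n) / (1 - (d : ℂ) * z ^ n)
          = 2 * (d : ℂ) * (n : ℂ) * z ^ (n - 1) * z / (1 - (d : ℂ) * z ^ n) ^ 2 from by ring]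
      rw [hzn]
      ring_nf
    have hzf : z * f z = (1 + w) / (1 - w) := by
      rw [hw]; exact e2
    -- real part
    have hre : (z * f z).re = (1 - Complex.normSq w) / Complex.normSq (1 - w) := by
      rw [hzf, Complex.div_re, ← add_div]
      congr 1
      simp [Complex.normSq_apply]
      ring
    -- abs of E
    have habsE : ‖z ^ 2 * deriv f z + z * f z‖
        = 2 * (n : ℝ) * ‖w‖ / Complex.normSq (1 - w) := by
      rw [hE, show (2 * (d : ℂ) * (n : ℂ) * z ^ n : ℂ) = 2 * (n : ℂ) * w from by rw [hw]; ring,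
        norm_div, norm_mul, norm_mul, norm_pow, Complex.sq_norm]
      norm_num
    rw [hre, habsE]
    have ht : 0 < Complex.normSq (1 - w) := Complex.normSq_pos.mpr hD
    rw [ge_iff_le, show α * (2 * (n : ℝ) * ‖w‖ / Complex.normSq (1 - w))
        = (α * (2 * (n : ℝ) * ‖w‖)) / Complex.normSq (1 - w) by ring,
      div_le_div_iff_of_pos_right ht]
    have hr0 : 0 ≤ ‖w‖ := norm_nonneg w
    rw [Complex.normSq_eq_norm_sq w]
    nlinarith [hkey, mul_nonneg (sub_nonneg.mpr hr_le) (add_nonneg hd_pos.le hr0),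
      mul_nonneg hαn.le (sub_nonneg.mpr hr_le)]
  · -- Part 2
    set c : ℂ := (d : ℂ) with hc
    have hzn0 : (0 : ℂ) ^ n = 0 := zero_pow (by omega)
    have hD0 : (1 : ℂ) - c * (0 : ℂ) ^ n ≠ 0 := by
      rw [hzn0]; simp
    set K : ℂ → ℂ := fun z => 2 * c + 2 * c ^ 2 * z ^ n * (1 - c * z ^ n)⁻¹ with hK
    have hKanal : AnalyticAt ℂ K 0 := by
      rw [hK]
      apply analyticAt_const.add
      exact (analyticAt_const.mul ((analyticAt_id).pow n)).mul
        ((analyticAt_const.sub (analyticAt_const.mul ((analyticAt_id).pow n))).inv hD0)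
    have hK0 : K 0 = 2 * c := by
      rw [hK]
      simp only [hzn0, mul_zero, zero_mul, add_zero]
    have heq : (fun z : ℂ => (1 + c * z ^ n) / (1 - c * z ^ n))
        =ᶠ[nhds (0:ℂ)] fun z => 1 + z ^ n * K z := by
      have hcont : ContinuousAt (fun z : ℂ => 1 - c * z ^ n) 0 := by fun_prop
      filter_upwards [hcont.eventually_ne hD0] with z hz
      rw [hK]
      field_simp
      ring
    obtain ⟨k', hk', hval, he⟩ := aux n K hKanal n le_rfl
    have h1 : iteratedDeriv n (fun z : ℂ => (1 + c * z ^ n) / (1 - c * z ^ n)) 0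
        = iteratedDeriv n (fun z : ℂ => 1 + z ^ n * K z) 0 :=
      (iterEq heq n).eq_of_nhds
    have h2 : iteratedDeriv n (fun z : ℂ => 1 + z ^ n * K z)
        = iteratedDeriv n (fun z : ℂ => z ^ n * K z) := by
      obtain ⟨m, rfl⟩ : ∃ m, n = m + 1 := ⟨n - 1, by omega⟩
      rw [iteratedDeriv_succ', iteratedDeriv_succ']
      have hdc : (deriv fun z : ℂ => 1 + z ^ (m + 1) * K z)
          = deriv fun z : ℂ => z ^ (m + 1) * K z := by
        funext u
        exact deriv_const_add 1
      rw [hdc]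
    rw [h1, h2]
    have h3 : iteratedDeriv n (fun z : ℂ => z ^ n * K z) 0 = (0:ℂ) ^ (n - n) * k' 0 :=
      he.eq_of_nhds
    rw [h3, Nat.sub_self, pow_zero, one_mul, hval, Nat.descFactorial_self, hK0]
    ring
end

section
/- Let α ≥ 1 and suppose f is analytic on the punctured unit disc E with simple pole at 0 and Re(z f(z)) > α |z² f'(z) + z f(z)| for all z ∈ E. Then Re(z² f'(z)) < 0 for all z ∈ E. -/
open Complex Metric

theorem Complex.re_neg_of_mul_norm_add_lt_re {α : ℝ} (hα : 1 ≤ α) {w u : ℂ}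
    (h : α * ‖w + u‖ < u.re) : w.re < 0 := by
  have h_norm_le : ‖w + u‖ ≤ α * ‖w + u‖ := le_mul_of_one_le_left (norm_nonneg _) hα
  have h_re_le : (w + u).re ≤ ‖w + u‖ := re_le_norm _
  rw [add_re] at h_re_le
  linarith

theorem stmt10_general (α : ℝ) (hα : 1 ≤ α)
    (f : ℂ → ℂ)
    (hME : ∀ z : ℂ, 0 < ‖z‖ → ‖z‖ < 1 →
      (z * f z).re > α * ‖z ^ 2 * deriv f z + z * f z‖) :
    ∀ z : ℂ, 0 < ‖z‖ → ‖z‖ < 1 →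
      (z ^ 2 * deriv f z).re < 0 :=
  fun z hz_pos hz_lt => re_neg_of_mul_norm_add_lt_re hα (hME z hz_pos hz_lt)

theorem stmt10 (α : ℝ) (hα : 1 ≤ α) (g : ℂ → ℂ)
    (hg : AnalyticOn ℂ g (ball (0:ℂ) 1))
    (f : ℂ → ℂ) (hf : ∀ z : ℂ, z ≠ 0 → f z = z⁻¹ + g z)
    (hME : ∀ z : ℂ, 0 < ‖z‖ → ‖z‖ < 1 →
      (z * f z).re > α * ‖z ^ 2 * deriv f z + z * f z‖) :
    ∀ z : ℂ, 0 < ‖z‖ → ‖z‖ < 1 →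
      (z ^ 2 * deriv f z).re < 0 :=
  stmt10_general α hα f hME
end

section
/- Let α ≥ 0 and let g(z) = 1/z + Σ_{k≥1} b_k z^k be analytic on the punctured unit disc E with Σ_{k≥1} k |b_k| ≤ δ where δ < 1/(1 + 2α). Then Re(z g(z)) > α |z² g'(z) + z g(z)| for all z ∈ E. -/
/-!
Writing `g z = z⁻¹ + ∑ b_k z^(k+1)`, one has `z g z = 1 + ∑ b_k z^(k+2)` and
`z² g' z = -1 + ∑ (k+1) b_k z^(k+2)`, so `z² g' z + z g z` has no constant term. On the unit disc
both power series are bounded by `M = ∑ (k+1) |b_k| ≤ δ`, whence `Re (z g z) ≥ 1 - M` and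
`|z² g' z + z g z| ≤ 2M`, and `1 - M > 2αM` is exactly `(1 + 2α) M < 1`.
-/

open Complex

section PowerSeries

variable {𝕜 : Type*} [RCLike 𝕜]

lemma norm_natCast_add_one (k : ℕ) : ‖(k : 𝕜) + 1‖ = (k : ℝ) + 1 := by
  exact_mod_cast RCLike.norm_natCast (K := 𝕜) (k + 1)

lemma norm_tsum_mul_pow_le {c : ℕ → 𝕜} {u : ℕ → ℝ} (hu : Summable u) (hcu : ∀ k, ‖c k‖ ≤ u k)
    {z : 𝕜} (hz : ‖z‖ ≤ 1) (n : ℕ → ℕ) : ‖∑' k, c k * z ^ n k‖ ≤ ∑' k, u k :=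
  tsum_of_norm_bounded hu.hasSum fun k => by
    rw [norm_mul, norm_pow]
    exact mul_le_of_le_one_right (norm_nonneg _) (pow_le_one₀ (norm_nonneg z) hz) |>.trans (hcu k)

lemma hasDerivAt_tsum_mul_pow_succ {b : ℕ → 𝕜} (hb : Summable fun k : ℕ => ((k : ℝ) + 1) * ‖b k‖)
    {z : 𝕜} (hz : ‖z‖ < 1) :
    HasDerivAt (fun w => ∑' k, b k * w ^ (k + 1)) (∑' k : ℕ, ((k : 𝕜) + 1) * b k * z ^ k) z := by
  refine hasDerivAt_tsum_of_isPreconnected hb Metric.isOpen_ball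
    (convex_ball (0 : 𝕜) 1).isPreconnected (g := fun k w => b k * w ^ (k + 1))
    (g' := fun k w => ((k : 𝕜) + 1) * b k * w ^ k) (y₀ := 0) (fun k w _ => ?_) (fun k w hw => ?_)
    (by simp) (by simp) (mem_ball_zero_iff.2 hz)
  · refine ((hasDerivAt_pow (k + 1) w).const_mul (b k)).congr_deriv ?_
    push_cast
    ring
  · rw [norm_mul, norm_mul, norm_natCast_add_one, norm_pow]
    exact mul_le_of_le_one_right (by positivity)
      (pow_le_one₀ (norm_nonneg w) (mem_ball_zero_iff.1 hw).le)

end PowerSeries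

section LaurentSeries

variable {b : ℕ → ℂ} {g : ℂ → ℂ}

lemma mul_eq_one_add_tsum (hg : ∀ z : ℂ, z ≠ 0 → g z = z⁻¹ + ∑' k : ℕ, b k * z ^ (k + 1))
    {z : ℂ} (hz : z ≠ 0) : z * g z = 1 + ∑' k, b k * z ^ (k + 2) := by
  rw [hg z hz, mul_add, mul_inv_cancel₀ hz, ← tsum_mul_left]
  congr 1
  exact tsum_congr fun k => by ring

lemma sq_mul_deriv_eq_neg_one_add_tsum
    (hg : ∀ z : ℂ, z ≠ 0 → g z = z⁻¹ + ∑' k : ℕ, b k * z ^ (k + 1))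
    (hb : Summable fun k : ℕ => ((k : ℝ) + 1) * ‖b k‖) {z : ℂ}
    (hz0 : z ≠ 0) (hz : ‖z‖ < 1) :
    z ^ 2 * deriv g z = -1 + ∑' k : ℕ, ((k : ℂ) + 1) * b k * z ^ (k + 2) := by
  have hg_nhds : g =ᶠ[nhds z] fun w => w⁻¹ + ∑' k, b k * w ^ (k + 1) :=
    Filter.eventually_of_mem (isOpen_ne.mem_nhds hz0) fun w hw => hg w hw
  rw [(((hasDerivAt_inv hz0).add (hasDerivAt_tsum_mul_pow_succ hb hz)).congr_of_eventuallyEq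
    hg_nhds).deriv, mul_add, mul_neg, mul_inv_cancel₀ (pow_ne_zero 2 hz0), ← tsum_mul_left]
  congr 1
  exact tsum_congr fun k => by ring

end LaurentSeries

theorem stmt11 (α δ : ℝ) (hα : 0 ≤ α) (hδ : δ < 1 / (1 + 2 * α))
    (b : ℕ → ℂ)
    (hSum : Summable fun k : ℕ => ((k : ℝ) + 1) * ‖b k‖)
    (hb : (∑' k : ℕ, ((k : ℝ) + 1) * ‖b k‖) ≤ δ)
    (g : ℂ → ℂ) (hg : ∀ z : ℂ, z ≠ 0 → g z = z⁻¹ + ∑' k : ℕ, b k * z ^ (k + 1)) :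
    ∀ z : ℂ, 0 < ‖z‖ → ‖z‖ < 1 →
      (z * g z).re > α * ‖(z ^ 2 * deriv g z + z * g z)‖ := by
  intro z hz0 hz1
  have hz_ne : z ≠ 0 := norm_pos_iff.1 hz0
  set M := ∑' k : ℕ, ((k : ℝ) + 1) * ‖b k‖
  have hS₁ : ‖∑' k, b k * z ^ (k + 2)‖ ≤ M :=
    norm_tsum_mul_pow_le hSum (fun k => le_mul_of_one_le_left (norm_nonneg _)
      (by linarith [k.cast_nonneg (α := ℝ)])) hz1.le _
  have hS₂ : ‖∑' k : ℕ, ((k : ℂ) + 1) * b k * z ^ (k + 2)‖ ≤ M :=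
    norm_tsum_mul_pow_le hSum (fun k => by rw [norm_mul, norm_natCast_add_one]) hz1.le _
  have hsum : z ^ 2 * deriv g z + z * g z =
      ∑' k : ℕ, ((k : ℂ) + 1) * b k * z ^ (k + 2) + ∑' k, b k * z ^ (k + 2) := by
    rw [sq_mul_deriv_eq_neg_one_add_tsum hg hSum hz_ne hz1, mul_eq_one_add_tsum hg hz_ne]
    ring
  have hre : 1 - M ≤ (z * g z).re := by
    rw [mul_eq_one_add_tsum hg hz_ne, add_re, one_re]
    linarith [neg_abs_le (∑' k, b k * z ^ (k + 2)).re, abs_re_le_norm (∑' k, b k * z ^ (k + 2))]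
  have hnorm : α * ‖z ^ 2 * deriv g z + z * g z‖ ≤ α * (2 * M) := by
    rw [hsum]
    exact mul_le_mul_of_nonneg_left ((norm_add_le _ _).trans (by linarith)) hα
  have hM : (1 + 2 * α) * M < 1 := by
    rw [lt_div_iff₀ (by linarith)] at hδ
    nlinarith
  linarith
end

section
/- Let α ≥ 0 and f(z) = 1/z − Σ_{n≥1} a_n z^n with a_n ≥ 0 and Σ_{n≥1} (1 + α(n+1)) a_n ≤ 1. Then for all z with |z| = r ∈ (0,1): 1/r − r/(1 + 2α) ≤ |f(z)| ≤ 1/r + r/(1 + 2α). -/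
open Complex

/-!
Comparing the weights `1 + α (n + 2)` with the smallest one, `1 + 2α`, the coefficient condition
gives `∑ aₙ ≤ 1 / (1 + 2α)`. On `|z| = r < 1` every `|z|^(n+1) ≤ r`, so the power-series part of `f`
has modulus at most `r / (1 + 2α)`, and the triangle inequality around `|1/z| = 1/r` gives both bounds.
-/

section WeightedSums

variable {ι : Type*} {a w : ι → ℝ} {c : ℝ}

theorem summable_of_summable_mul_of_le (hc : 0 < c) (ha : ∀ i, 0 ≤ a i) (hw : ∀ i, c ≤ w i)
    (hs : Summable fun i => w i * a i) : Summable a :=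
  (hs.div_const c).of_nonneg_of_le ha fun i =>
    (le_div_iff₀ hc).2 (by rw [mul_comm]; exact mul_le_mul_of_nonneg_right (hw i) (ha i))

theorem mul_tsum_le_tsum_mul_of_le (ha : ∀ i, 0 ≤ a i) (hw : ∀ i, c ≤ w i) (hsa : Summable a)
    (hs : Summable fun i => w i * a i) : c * ∑' i, a i ≤ ∑' i, w i * a i := by
  rw [← tsum_mul_left]
  exact (hsa.mul_left c).tsum_le_tsum (fun i => mul_le_mul_of_nonneg_right (hw i) (ha i)) hs

end WeightedSums

theorem norm_tsum_mul_pow_succ_le {a : ℕ → ℝ} (ha : ∀ n, 0 ≤ a n) (hsa : Summable a) {z : ℂ}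
    (hz : ‖z‖ ≤ 1) : ‖∑' n, (a n : ℂ) * z ^ (n + 1)‖ ≤ (∑' n, a n) * ‖z‖ := by
  have hterm : ∀ n, ‖(a n : ℂ) * z ^ (n + 1)‖ ≤ a n * ‖z‖ := fun n => by
    rw [norm_mul, norm_pow, norm_real, Real.norm_of_nonneg (ha n)]
    exact mul_le_mul_of_nonneg_left (pow_le_of_le_one (norm_nonneg z) hz n.succ_ne_zero) (ha n)
  rw [← tsum_mul_right]
  exact tsum_of_norm_bounded (hsa.mul_right _).hasSum hterm

theorem stmt15 (α : ℝ) (hα : 0 ≤ α) (a : ℕ → ℝ) (ha : ∀ n, 0 ≤ a n)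
    (hSum : Summable fun n : ℕ => (1 + α * (n + 2)) * a n)
    (hb : (∑' n : ℕ, (1 + α * (n + 2)) * a n) ≤ 1)
    (f : ℂ → ℂ)
    (hf : ∀ z : ℂ, z ≠ 0 → f z = z⁻¹ - ∑' n : ℕ, (a n : ℂ) * z ^ (n + 1)) :
    ∀ (r : ℝ) (z : ℂ), 0 < r → r < 1 → ‖z‖ = r →
      1 / r - r / (1 + 2 * α) ≤ ‖f z‖ ∧
      ‖f z‖ ≤ 1 / r + r / (1 + 2 * α) := by
  intro r z hr hr1 hz
  have hc : 0 < 1 + 2 * α := by linarith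
  have hw : ∀ n : ℕ, 1 + 2 * α ≤ 1 + α * (n + 2) := fun n => by nlinarith [n.cast_nonneg (α := ℝ)]
  have hsa : Summable a := summable_of_summable_mul_of_le hc ha hw hSum
  have hA : ∑' n, a n ≤ 1 / (1 + 2 * α) := by
    rw [le_div_iff₀ hc, mul_comm]
    exact (mul_tsum_le_tsum_mul_of_le ha hw hsa hSum).trans hb
  have hS : ‖∑' n, (a n : ℂ) * z ^ (n + 1)‖ ≤ r / (1 + 2 * α) := calc
    _ ≤ (∑' n, a n) * r := hz ▸ norm_tsum_mul_pow_succ_le ha hsa (hz ▸ hr1.le)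
    _ ≤ 1 / (1 + 2 * α) * r := mul_le_mul_of_nonneg_right hA hr.le
    _ = r / (1 + 2 * α) := by ring
  have hinv : ‖z⁻¹‖ = 1 / r := by rw [norm_inv, hz, one_div]
  rw [hf z (norm_pos_iff.1 (hz ▸ hr))]
  constructor
  · linarith [norm_sub_norm_le z⁻¹ (∑' n, (a n : ℂ) * z ^ (n + 1))]
  · linarith [norm_sub_le z⁻¹ (∑' n, (a n : ℂ) * z ^ (n + 1))]
end

section
/- Let α ≥ 0 and set d_k = 1 + α(k+1). Suppose f(z) = 1/z + Σ_{k≥1} a_k z^k satisfies Σ_{k≥1} d_k |a_k| ≤ 1. For n ≥ 1 let S_n(z) = 1/z + Σ_{k=1}^{n-1} a_k z^k. Then Re(f(z)/S_n(z)) > 1 − 1/d_n for all z in the punctured unit disc E. -/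
/-! Put `c k = z · a_{k+1} z^{k+1}`, so that `z f(z) = 1 + ∑ c` and `z S_n(z) = 1 + ∑_{k<n-1} c k`,
while `∑ d_{k+1} ‖c k‖ ≤ ‖z‖ < 1`. As the weights increase and are at least `1`,
`d_n ‖z (f - S_n)‖ ≤ ∑_{k≥n-1} d_{k+1} ‖c k‖ < 1 - ∑_{k<n-1} ‖c k‖ ≤ ‖z S_n‖`,
that is `‖f / S_n - 1‖ < 1 / d_n`. -/

open Complex

theorem one_sub_one_div_lt_re_div {u v : ℂ} {d : ℝ} (hd : 0 < d) (h : d * ‖u - v‖ < ‖v‖) :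
    1 - 1 / d < (u / v).re := by
  have hv : 0 < ‖v‖ := (mul_nonneg hd.le (norm_nonneg _)).trans_lt h
  have hquot : ‖(u - v) / v‖ < 1 / d := by
    rw [norm_div, div_lt_div_iff₀ hv hd]
    linarith
  have hsplit : u / v = 1 + (u - v) / v := by
    field_simp [norm_pos_iff.mp hv]
    ring
  rw [hsplit, add_re, one_re]
  linarith [neg_abs_le ((u - v) / v).re, abs_re_le_norm ((u - v) / v)]

theorem summable_and_tsum_lt_one_of_weighted_norm_mul_pow {w : ℕ → ℝ} {b : ℕ → ℂ} {z : ℂ}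
    (hw : ∀ k, 0 ≤ w k) (hz : ‖z‖ < 1) (hb : Summable fun k => w k * ‖b k‖)
    (hb1 : ∑' k, w k * ‖b k‖ ≤ 1) :
    (Summable fun k => w k * ‖z * (b k * z ^ (k + 1))‖) ∧
      ∑' k, w k * ‖z * (b k * z ^ (k + 1))‖ < 1 := by
  have hle : ∀ k, w k * ‖z * (b k * z ^ (k + 1))‖ ≤ ‖z‖ * (w k * ‖b k‖) := fun k => by
    have hbz : ‖b k * z ^ (k + 1)‖ ≤ ‖b k‖ := by
      rw [norm_mul, norm_pow]
      exact mul_le_of_le_one_right (norm_nonneg _) (pow_le_one₀ (norm_nonneg z) hz.le)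
    rw [norm_mul, mul_left_comm]
    exact mul_le_mul_of_nonneg_left (mul_le_mul_of_nonneg_left hbz (hw k)) (norm_nonneg z)
  have hsum : Summable fun k => w k * ‖z * (b k * z ^ (k + 1))‖ :=
    (hb.mul_left ‖z‖).of_nonneg_of_le (fun k => mul_nonneg (hw k) (norm_nonneg _)) hle
  refine ⟨hsum, ?_⟩
  calc ∑' k, w k * ‖z * (b k * z ^ (k + 1))‖ ≤ ∑' k, ‖z‖ * (w k * ‖b k‖) :=
        hsum.tsum_le_tsum hle (hb.mul_left ‖z‖)
    _ = ‖z‖ * ∑' k, w k * ‖b k‖ := tsum_mul_left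
    _ ≤ ‖z‖ := mul_le_of_le_one_right (norm_nonneg z) hb1
    _ < 1 := hz

theorem mul_norm_tsum_sub_sum_range_lt {E : Type*} [NormedRing E] [NormOneClass E]
    [CompleteSpace E] {w : ℕ → ℝ} {c : ℕ → E} (hw : Monotone w) (hw0 : 1 ≤ w 0)
    (hc : Summable fun k => w k * ‖c k‖) (hc1 : ∑' k, w k * ‖c k‖ < 1) (m : ℕ) :
    w m * ‖∑' k, c k - ∑ k ∈ Finset.range m, c k‖ < ‖1 + ∑ k ∈ Finset.range m, c k‖ := by
  have hw1 : ∀ k, 1 ≤ w k := fun k => hw0.trans (hw k.zero_le)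
  have hnorm : Summable fun k => ‖c k‖ :=
    hc.of_nonneg_of_le (fun k => norm_nonneg _) fun k =>
      le_mul_of_one_le_left (norm_nonneg _) (hw1 k)
  have hnorm_tail : Summable fun j => ‖c (j + m)‖ := (summable_nat_add_iff m).mpr hnorm
  have htail : ∑' k, c k - ∑ k ∈ Finset.range m, c k = ∑' j, c (j + m) := by
    rw [← (hnorm.of_norm).sum_add_tsum_nat_add m, add_sub_cancel_left]
  have htail_le : w m * ‖∑' j, c (j + m)‖ ≤ ∑' j, w (j + m) * ‖c (j + m)‖ :=
    calc w m * ‖∑' j, c (j + m)‖ ≤ w m * ∑' j, ‖c (j + m)‖ :=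
          mul_le_mul_of_nonneg_left (norm_tsum_le_tsum_norm hnorm_tail) (zero_le_one.trans (hw1 m))
      _ = ∑' j, w m * ‖c (j + m)‖ := tsum_mul_left.symm
      _ ≤ ∑' j, w (j + m) * ‖c (j + m)‖ :=
          (hnorm_tail.mul_left (w m)).tsum_le_tsum
            (fun j => mul_le_mul_of_nonneg_right (hw (Nat.le_add_left m j)) (norm_nonneg _))
            ((summable_nat_add_iff m).mpr hc)
  have hhead : ‖∑ k ∈ Finset.range m, c k‖ ≤ ∑ k ∈ Finset.range m, w k * ‖c k‖ :=
    (norm_sum_le _ _).trans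
      (Finset.sum_le_sum fun k _ => le_mul_of_one_le_left (norm_nonneg _) (hw1 k))
  have hsplit := hc.sum_add_tsum_nat_add m
  have hone := norm_sub_le_norm_add (1 : E) (∑ k ∈ Finset.range m, c k)
  rw [norm_one] at hone
  rw [htail]
  linarith

theorem stmt16_general (α : ℝ) (hα : 0 ≤ α) (a : ℕ → ℂ)
    (hSum : Summable fun k : ℕ => (1 + α * (k + 2)) * ‖a (k + 1)‖)
    (hb : (∑' k : ℕ, (1 + α * (k + 2)) * ‖a (k + 1)‖) ≤ 1)
    (f : ℂ → ℂ)
    (hf : ∀ z : ℂ, z ≠ 0 → f z = z⁻¹ + ∑' k : ℕ, a (k + 1) * z ^ (k + 1))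
    (n : ℕ)
    (S : ℂ → ℂ)
    (hS : ∀ z : ℂ, z ≠ 0 → S z = z⁻¹ + ∑ k ∈ Finset.Icc 1 (n - 1), a k * z ^ k) :
    ∀ z : ℂ, 0 < ‖z‖ → ‖z‖ < 1 →
      (f z / S z).re > 1 - 1 / (1 + α * (n + 1)) := by
  intro z hz0 hz1
  have hz : z ≠ 0 := norm_pos_iff.mp hz0
  set w : ℕ → ℝ := fun k => 1 + α * (k + 2)
  have hw : Monotone w := fun i j hij => by simp only [w]; gcongr
  obtain ⟨hc, hc1⟩ := summable_and_tsum_lt_one_of_weighted_norm_mul_pow (b := fun k => a (k + 1))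
    (fun k => by positivity) hz1 hSum hb
  have hzf : z * f z = 1 + ∑' k, z * (a (k + 1) * z ^ (k + 1)) := by
    rw [hf z hz, mul_add, mul_inv_cancel₀ hz, tsum_mul_left]
  have hzS : z * S z = 1 + ∑ k ∈ Finset.range (n - 1), z * (a (k + 1) * z ^ (k + 1)) := by
    rw [hS z hz, mul_add, mul_inv_cancel₀ hz, Finset.mul_sum, Finset.range_eq_Ico,
      Finset.sum_Ico_add' (fun k => z * (a k * z ^ k)), ← Finset.Ico_add_one_right_eq_Icc]
  have key :=
    mul_norm_tsum_sub_sum_range_lt hw (le_add_of_nonneg_right (by positivity)) hc hc1 (n - 1)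
  have hzT : z * (f z - S z) = ∑' k, z * (a (k + 1) * z ^ (k + 1)) -
      ∑ k ∈ Finset.range (n - 1), z * (a (k + 1) * z ^ (k + 1)) := by
    rw [mul_sub, hzf, hzS]
    ring
  rw [← hzS, ← hzT, norm_mul, norm_mul] at key
  have hd : 1 + α * (n + 1) ≤ w (n - 1) := by
    have : (n : ℝ) + 1 ≤ ((n - 1 : ℕ) : ℝ) + 2 := by norm_cast; omega
    simp only [w]
    gcongr
  have hwT : w (n - 1) * ‖f z - S z‖ < ‖S z‖ :=
    lt_of_mul_lt_mul_left (by linarith [key]) hz0.le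
  exact one_sub_one_div_lt_re_div (by positivity)
    ((mul_le_mul_of_nonneg_right hd (norm_nonneg _)).trans_lt hwT)

theorem stmt16 (α : ℝ) (hα : 0 ≤ α) (a : ℕ → ℂ)
    (hSum : Summable fun k : ℕ => (1 + α * (k + 2)) * ‖a (k + 1)‖)
    (hb : (∑' k : ℕ, (1 + α * (k + 2)) * ‖a (k + 1)‖) ≤ 1)
    (f : ℂ → ℂ)
    (hf : ∀ z : ℂ, z ≠ 0 → f z = z⁻¹ + ∑' k : ℕ, a (k + 1) * z ^ (k + 1))
    (n : ℕ) (hn : 1 ≤ n)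
    (S : ℂ → ℂ)
    (hS : ∀ z : ℂ, z ≠ 0 → S z = z⁻¹ + ∑ k ∈ Finset.Icc 1 (n - 1), a k * z ^ k) :
    ∀ z : ℂ, 0 < ‖z‖ → ‖z‖ < 1 →
      (f z / S z).re > 1 - 1 / (1 + α * (n + 1)) :=
  stmt16_general α hα a hSum hb f hf n S hS
end

section
/- Let α ≥ 0 and set d_k = 1 + α(k+1). Suppose f(z) = 1/z + Σ_{k≥1} a_k z^k satisfies Σ_{k≥1} d_k |a_k| ≤ 1. For n ≥ 1 let S_n(z) = 1/z + Σ_{k=1}^{n-1} a_k z^k. Then Re(S_n(z)/f(z)) > d_n/(1 + d_n) for all z in the punctured unit disc E. -/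
/-!
Multiplying numerator and denominator by `z`, `S_n(z)/f(z) = (1 + A)/(1 + A + B)`, where `A` is the
part of `z (f(z) - 1/z)` of degree `≤ n` and `B` the rest. A complex number `w` has
`Re w > d/(1+d)` exactly when it is closer to `1` than to `(d-1)/(d+1)`; for `w = (1+A)/(1+A+B)`
and `d ≥ 1` this reduces, by the triangle inequality, to `‖A‖ + d‖B‖ < 1`. Finally
`‖A‖ + d_n‖B‖ ≤ |z| ∑ d_k |a_k| < 1`, since `d_k ≥ 1` for all `k` and `d_k ≥ d_n` for `k ≥ n`.
-/

open Complex

theorem div_one_add_lt_re_div {d : ℝ} (hd : -1 < d) {p q : ℂ} (hq : q ≠ 0)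
    (h : (1 + d) * ‖p - q‖ < ‖(1 + d) * p + (1 - d) * q‖) : d / (1 + d) < (p / q).re := by
  set w := p / q
  have hp : p = w * q := (div_mul_cancel₀ p hq).symm
  have hq' : 0 < ‖q‖ := norm_pos_iff.mpr hq
  have hw : (1 + d) * ‖w - 1‖ < ‖(1 + d) * w + (1 - d)‖ := by
    rw [hp, show w * q - q = (w - 1) * q by ring,
      show (1 + d) * (w * q) + (1 - d) * q = ((1 + d) * w + (1 - d)) * q by ring,
      norm_mul, norm_mul, ← mul_assoc] at h
    exact lt_of_mul_lt_mul_right h hq'.le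
  have hsq : (1 + d) ^ 2 * normSq (w - 1) < normSq ((1 + d) * w + (1 - d)) := by
    rw [← Complex.sq_norm, ← Complex.sq_norm, ← mul_pow]
    exact pow_lt_pow_left₀ hw (by have := norm_nonneg (w - 1); nlinarith) two_ne_zero
  simp only [normSq_apply, sub_re, sub_im, add_re, add_im, mul_re, mul_im, ofReal_re,
    ofReal_im, one_re, one_im] at hsq
  rw [div_lt_iff₀ (by linarith)]
  nlinarith

theorem div_one_add_lt_re_div_of_norm_add_mul_norm_lt {d : ℝ} (hd : 1 ≤ d) {A B : ℂ}
    (h : ‖A‖ + d * ‖B‖ < 1) : d / (1 + d) < ((1 + A) / (1 + A + B)).re := by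
  have hB : ‖B‖ ≤ d * ‖B‖ := le_mul_of_one_le_left (norm_nonneg B) hd
  have hq : 1 + A + B ≠ 0 := by
    intro h0
    have : ‖A + B‖ = 1 := by rw [show A + B = -1 by linear_combination h0]; simp
    linarith [norm_add_le A B]
  refine div_one_add_lt_re_div (by linarith) hq ?_
  have h2 : ‖(2 : ℂ)‖ - ‖2 * A + (1 - d) * B‖ ≤ ‖2 + (2 * A + (1 - d) * B)‖ :=
    norm_sub_le_norm_add _ _
  have h3 : ‖2 * A + (1 - d) * B‖ ≤ 2 * ‖A‖ + (d - 1) * ‖B‖ := by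
    calc ‖2 * A + (1 - d) * B‖ ≤ ‖2 * A‖ + ‖(1 - d) * B‖ := norm_add_le _ _
      _ = 2 * ‖A‖ + (d - 1) * ‖B‖ := by
        rw [norm_mul, norm_mul, ← ofReal_one, ← ofReal_sub, norm_real,
          Real.norm_of_nonpos (by linarith)]
        norm_num
  rw [show 1 + A - (1 + A + B) = -B by ring, norm_neg,
    show (1 + (d : ℂ)) * (1 + A) + (1 - d) * (1 + A + B) = 2 + (2 * A + (1 - d) * B) by ring]
  norm_num at h2
  linarith

theorem norm_mul_pow_le_of_norm_le_one {𝕜 : Type*} [NormedDivisionRing 𝕜] {z : 𝕜}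
    (hz : ‖z‖ ≤ 1) (c : 𝕜) (j : ℕ) : ‖c * z ^ j‖ ≤ ‖c‖ := by
  rw [norm_mul, norm_pow]
  exact mul_le_of_le_one_right (norm_nonneg _) (pow_le_one₀ (norm_nonneg _) hz)

theorem sum_range_add_mul_tsum_nat_add_le {u w : ℕ → ℝ} {d : ℝ} (m : ℕ) (hu : ∀ k, 0 ≤ u k)
    (hw : ∀ k, 1 ≤ w k) (hwd : ∀ k, d ≤ w (k + m)) (hwu : Summable fun k => w k * u k) :
    ∑ k ∈ Finset.range m, u k + d * ∑' k, u (k + m) ≤ ∑' k, w k * u k := by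
  have hu_le : ∀ k, u k ≤ w k * u k := fun k => le_mul_of_one_le_left (hu k) (hw k)
  have hsu : Summable fun k => u (k + m) :=
    (summable_nat_add_iff m).2 (hwu.of_nonneg_of_le hu hu_le)
  rw [← hwu.sum_add_tsum_nat_add m, ← tsum_mul_left]
  gcongr with k _ k
  · exact hu_le k
  · exact hsu.mul_left d
  · exact (summable_nat_add_iff m).2 hwu
  · exact hu _
  · exact hwd k

theorem div_one_add_lt_re_partialSum_div {d : ℝ} (hd : 1 ≤ d) {b : ℕ → ℂ}
    (hb : Summable fun k => ‖b k‖) (m : ℕ)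
    (hbd : ∑ k ∈ Finset.range m, ‖b k‖ + d * ∑' k, ‖b (k + m)‖ ≤ 1) {z : ℂ} (hz : ‖z‖ < 1) :
    d / (1 + d) < ((1 + z * ∑ k ∈ Finset.range m, b k * z ^ (k + 1)) /
      (1 + z * ∑' k, b k * z ^ (k + 1))).re := by
  have hz_le : ‖z‖ ≤ 1 := hz.le
  have hser : Summable fun k => b k * z ^ (k + 1) :=
    .of_norm_bounded hb fun k => norm_mul_pow_le_of_norm_le_one hz_le _ _
  set F := ∑ k ∈ Finset.range m, b k * z ^ (k + 1)
  set G := ∑' k, b (k + m) * z ^ (k + m + 1)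
  have hF : ‖F‖ ≤ ∑ k ∈ Finset.range m, ‖b k‖ :=
    norm_sum_le_of_le _ fun k _ => norm_mul_pow_le_of_norm_le_one hz_le _ _
  have hG : ‖G‖ ≤ ∑' k, ‖b (k + m)‖ :=
    tsum_of_norm_bounded ((summable_nat_add_iff m).2 hb).hasSum fun k =>
      norm_mul_pow_le_of_norm_le_one hz_le _ _
  rw [← hser.sum_add_tsum_nat_add m, mul_add, ← add_assoc]
  refine div_one_add_lt_re_div_of_norm_add_mul_norm_lt hd ?_
  calc ‖z * F‖ + d * ‖z * G‖ = ‖z‖ * (‖F‖ + d * ‖G‖) := by rw [norm_mul, norm_mul]; ring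
    _ ≤ ‖z‖ * 1 := by
      have := mul_le_mul_of_nonneg_left hG (by linarith : 0 ≤ d)
      gcongr
      linarith
    _ < 1 := by rwa [mul_one]

theorem stmt17_general (α : ℝ) (hα : 0 ≤ α) (a : ℕ → ℂ)
    (hSum : Summable fun k : ℕ => (1 + α * (k + 2)) * ‖a (k + 1)‖)
    (hb : (∑' k : ℕ, (1 + α * (k + 2)) * ‖a (k + 1)‖) ≤ 1)
    (f : ℂ → ℂ)
    (hf : ∀ z : ℂ, z ≠ 0 → f z = z⁻¹ + ∑' k : ℕ, a (k + 1) * z ^ (k + 1))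
    (n : ℕ)
    (S : ℂ → ℂ)
    (hS : ∀ z : ℂ, z ≠ 0 → S z = z⁻¹ + ∑ k ∈ Finset.Icc 1 (n - 1), a k * z ^ k) :
    ∀ z : ℂ, 0 < ‖z‖ → ‖z‖ < 1 →
      (S z / f z).re > (1 + α * (n + 1)) / (1 + (1 + α * (n + 1))) := by
  intro z hz0 hz1
  have hz : z ≠ 0 := norm_pos_iff.mp hz0
  set d : ℝ := 1 + α * (n + 1)
  have hw : ∀ k : ℕ, 1 ≤ 1 + α * ((k : ℝ) + 2) := fun k =>
    le_add_of_nonneg_right (by positivity)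
  have hd : 1 ≤ d := le_add_of_nonneg_right (by positivity)
  have hwd : ∀ k : ℕ, d ≤ 1 + α * (((k + (n - 1) : ℕ) : ℝ) + 2) := fun k => by
    have : (n : ℝ) + 1 ≤ (k + (n - 1) : ℕ) + 2 := by
      exact_mod_cast (by omega : n + 1 ≤ k + (n - 1) + 2)
    show 1 + α * (n + 1) ≤ _
    gcongr
  have hbd := (sum_range_add_mul_tsum_nat_add_le (n - 1) (fun k => norm_nonneg (a (k + 1)))
    hw hwd hSum).trans hb
  have ha : Summable fun k => ‖a (k + 1)‖ := hSum.of_nonneg_of_le (fun k => norm_nonneg _)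
    fun k => le_mul_of_one_le_left (norm_nonneg _) (hw k)
  have hSf : S z / f z = (1 + z * ∑ k ∈ Finset.range (n - 1), a (k + 1) * z ^ (k + 1)) /
      (1 + z * ∑' k, a (k + 1) * z ^ (k + 1)) := by
    rw [hS z hz, hf z hz, ← Finset.Ico_add_one_right_eq_Icc, Finset.sum_Ico_eq_sum_range,
      Nat.add_sub_cancel]
    simp only [add_comm 1]
    field_simp
  rw [gt_iff_lt, hSf]
  exact div_one_add_lt_re_partialSum_div hd ha (n - 1) hbd hz1

theorem stmt17 (α : ℝ) (hα : 0 ≤ α) (a : ℕ → ℂ)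
    (hSum : Summable fun k : ℕ => (1 + α * (k + 2)) * ‖a (k + 1)‖)
    (hb : (∑' k : ℕ, (1 + α * (k + 2)) * ‖a (k + 1)‖) ≤ 1)
    (f : ℂ → ℂ)
    (hf : ∀ z : ℂ, z ≠ 0 → f z = z⁻¹ + ∑' k : ℕ, a (k + 1) * z ^ (k + 1))
    (n : ℕ) (hn : 1 ≤ n)
    (S : ℂ → ℂ)
    (hS : ∀ z : ℂ, z ≠ 0 → S z = z⁻¹ + ∑ k ∈ Finset.Icc 1 (n - 1), a k * z ^ k) :
    ∀ z : ℂ, 0 < ‖z‖ → ‖z‖ < 1 →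
      (S z / f z).re > (1 + α * (n + 1)) / (1 + (1 + α * (n + 1))) :=
  stmt17_general α hα a hSum hb f hf n S hS
end
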